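/- Let R be either β or βη. For all closed λ-terms F and M, if F M ≈_R M, then Θ F ≤_R M, where Θ = (λx.λy.y(xxy))(λx.λy.y(xxy)) is Turing's fixed point combinator; that is, Θ also produces least fixed points with respect to the preorder ≤_R. -/

import Mathlib

/-!
Lambda terms over a variable type `V`, intrinsically taken up to
α-equivalence, via the nested-datatype ("presheaf" / well-scoped de Bruijn)
representation: the body of a λ-abstraction is a term over `Option V`,
the bound variable being `none`.
-/

/-- λ-terms over a variable type, up to α-equivalence. -/
inductive Term : Type u → Type (u + 1)
  | var {V : Type u} : V → Term V
  | app {V : Type u} : Term V → Term V → Term V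
  | lam {V : Type u} : Term (Option V) → Term V

namespace Term

/-- Renaming of (free) variables. -/
def map : {V : Type u} → {W : Type v} → (V → W) → Term V → Term W
  | _, _, f, var v => var (f v)
  | _, _, f, app M N => app (map f M) (map f N)
  | _, _, f, lam B => lam (map (Option.map f) B)

/-- Simultaneous (capture-avoiding) substitution. -/
def bind : {V : Type u} → {W : Type v} → (V → Term W) → Term V → Term W
  | _, _, f, var v => f v
  | _, _, f, app M N => app (bind f M) (bind f N)
  | _, _, f, lam B =>
      lam (bind (fun o => Option.elim o (var none) (fun v => map some (f v))) B)

/-- The set of free variables of a term. -/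
def fv : {V : Type u} → Term V → Set V
  | _, var v => {v}
  | _, app M N => fv M ∪ fv N
  | _, lam B => {v | some v ∈ fv B}

open Classical in
/-- Capture-avoiding substitution `M[v := N]`. -/
noncomputable def subst {V : Type u} (M : Term V) (v : V) (N : Term V) : Term V :=
  M.bind (fun u => if u = v then N else var u)

/-- Instantiation of the bound variable of the body of a λ-abstraction. -/
def instantiate {V : Type u} (B : Term (Option V)) (N : Term V) : Term V :=
  B.bind (fun o => Option.elim o N var)

open Classical in
/-- λ-abstraction `λ v. M` over a named variable `v`. -/
noncomputable def abs {V : Type u} (v : V) (M : Term V) : Term V :=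
  lam (M.map (fun u => if u = v then none else some u))

end Term

/-- A term is closed if it has no free variables. -/
def Closed {V : Type u} (M : Term V) : Prop := Term.fv M = ∅

/-- The β relation: `((λv.M)N, M[v := N])`. -/
def Beta {V : Type u} (M N : Term V) : Prop :=
  ∃ B P, M = Term.app (Term.lam B) P ∧ N = Term.instantiate B P

/-- The η relation: `((λv. M v), M)` with `v ∉ FV(M)`. -/
def Eta {V : Type u} (M N : Term V) : Prop :=
  M = Term.lam (Term.app (N.map some) (Term.var none))

/-- The βη relation. -/
def BetaEta {V : Type u} (M N : Term V) : Prop := Beta M N ∨ Eta M N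

/-- One-step `R`-reduction: the least compatible relation containing `R`. -/
inductive Step {V : Type u} (R : Term V → Term V → Prop) : Term V → Term V → Prop
  | base {M N : Term V} : R M N → Step R M N
  | appL {M M' N : Term V} : Step R M M' → Step R (Term.app M N) (Term.app M' N)
  | appR {M N N' : Term V} : Step R N N' → Step R (Term.app M N) (Term.app M N')
  | abs (v : V) {M M' : Term V} : Step R M M' → Step R (Term.abs v M) (Term.abs v M')

/-- `R`-reduction `→→_R`: the least preorder containing one-step `R`-reduction. -/
def Red {V : Type u} (R : Term V → Term V → Prop) : Term V → Term V → Prop :=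
  Relation.ReflTransGen (Step R)

/-- `R`-equivalence `≈_R`: the least equivalence relation containing `→_R`. -/
def REquiv {V : Type u} (R : Term V → Term V → Prop) : Term V → Term V → Prop :=
  Relation.EqvGen (Step R)

/-- A term is `R`-reduced if it admits no one-step `R`-reduction. -/
def Reduced {V : Type u} (R : Term V → Term V → Prop) (M : Term V) : Prop :=
  ¬ ∃ N, Step R M N

/-- `N` is an `R`-normal form of `M`. -/
def IsNormalFormOf {V : Type u} (R : Term V → Term V → Prop) (M N : Term V) : Prop :=
  Reduced R N ∧ REquiv R M N

/-- The preorder `≤_R`. -/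
def LeR {V : Type u} (R : Term V → Term V → Prop) (F G : Term V) : Prop :=
  ∀ N : Term V, Closed N → ∀ N' : Term V,
    IsNormalFormOf R (Term.app F N) N' → IsNormalFormOf R (Term.app G N) N'

/-- `R_{F,y} = R ∪ S_{F,y}` where `S_{F,y} = {(y, F y)}`. -/
def Rfy {V : Type u} (R : Term V → Term V → Prop) (F : Term V) (y : V) :
    Term V → Term V → Prop :=
  fun A B => R A B ∨ (A = Term.var y ∧ B = Term.app F (Term.var y))

/-- Curry's fixed point combinator `Y = λf.(λg.f(gg))(λg.f(gg))`. -/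
def Y {V : Type u} : Term V :=
  Term.lam (Term.app
    (Term.lam (Term.app (Term.var (some none))
      (Term.app (Term.var none) (Term.var none))))
    (Term.lam (Term.app (Term.var (some none))
      (Term.app (Term.var none) (Term.var none)))))

/-- `λg. M (g g)` with `g` fresh. -/
def halfY {V : Type u} (M : Term V) : Term V :=
  Term.lam (Term.app (M.map some) (Term.app (Term.var none) (Term.var none)))

/-- `Y_{M,N} = (λg. M (g g)) (λg. N (g g))` with `g ∉ FV(M) ∪ FV(N)`. -/
def Ypair {V : Type u} (M N : Term V) : Term V := Term.app (halfY M) (halfY N)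

/-- `M^{(n)} N`: `n`-fold application of `M` to `N`. -/
def iterApp {V : Type u} (M : Term V) : ℕ → Term V → Term V
  | 0, N => N
  | n + 1, N => Term.app M (iterApp M n N)

/-- `Y_n = λf. f^{(n)} Y_{f,f}`. -/
def Yn {V : Type u} (n : ℕ) : Term V :=
  Term.lam (iterApp (Term.var none) n (Ypair (Term.var none) (Term.var none)))

/-- `Υ_F = { Y_n F' : F →→_R F', n ≥ 0 } ∪ { Y_{F',F''} : F →→_R F', F →→_R F'' }`. -/
def Upsilon {V : Type u} (R : Term V → Term V → Prop) (F : Term V) : Set (Term V) :=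
  {M | ∃ (n : ℕ) (F' : Term V), Red R F F' ∧ M = Term.app (Yn n) F'} ∪
  {M | ∃ F' F'' : Term V, Red R F F' ∧ Red R F F'' ∧ M = Ypair F' F''}

/-- The extended variable set `Ṽ_F = V ∪ V'_F`, where `V'_F` is a set
disjoint from `V` in bijection with `Υ_F`. -/
def ExtV {V : Type u} (R : Term V → Term V → Prop) (F : Term V) : Type (u + 1) :=
  V ⊕ {K : Term V // K ∈ Upsilon R F}

/-- The realization map `ρ : Λ̃_F → Λ`, substituting `K` for each `v_K ∈ V'_F`. -/
def realize {V : Type u} {R : Term V → Term V → Prop} {F : Term V} :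
    Term (ExtV R F) → Term V :=
  Term.bind (Sum.elim Term.var (fun K => K.1))

/-- The flattening map `φ_y : Λ̃_F → Λ`, substituting `y` for every variable in `V'_F`. -/
def flatten {V : Type u} {R : Term V → Term V → Prop} {F : Term V} (y : V) :
    Term (ExtV R F) → Term V :=
  Term.bind (Sum.elim Term.var (fun _ => Term.var y))

/-- `λx.λy. y (x x y)`. -/
def thetaHalf {V : Type u} : Term V :=
  Term.lam (Term.lam (Term.app (Term.var none)
    (Term.app (Term.app (Term.var (some none)) (Term.var (some none)))
      (Term.var none))))

/-- Turing's fixed point combinator `Θ = (λx.λy.y(xxy))(λx.λy.y(xxy))`. -/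
def Theta {V : Type u} : Term V := Term.app thetaHalf thetaHalf

/-!
Since `V` is infinite, `R`-reduction coincides with the de Bruijn-style reduction `Term.OneStep η`,
which is Church–Rosser (Takahashi's parallel reduction and complete developments); so if `Θ F N`
has the normal form `N'`, then `Θ F N` reduces to `N'`. Every reduct of `Θ F N` is a context `C`
whose holes are filled with *cores* `T G`, where `T` is a reduct of `Θ` and `G` a reduct of `F`,
and filling the same holes with `M` instead gives a term convertible to `M N`: a core can only
unfold as `T G → G (T' G)`, which is matched by `M ≈ F M ≈ G M`. Cores are redexes, so the normal
form `N'` has no holes, and hence `N' ≈ M N`.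
-/

universe u v w

namespace Term

section Substitution

variable {V : Type u} {W : Type v}

def up (f : V → Term W) : Option V → Term (Option W) :=
  fun o => Option.elim o (var none) (fun v => map some (f v))

@[simp] theorem up_none (f : V → Term W) : up f none = var none := rfl

@[simp] theorem up_some (f : V → Term W) (v : V) : up f (some v) = map some (f v) := rfl

@[simp] theorem map_var (f : V → W) (v : V) : map f (var v) = var (f v) := rfl

@[simp] theorem map_app (f : V → W) (M N : Term V) :
    map f (app M N) = app (map f M) (map f N) := rfl

@[simp] theorem map_lam (f : V → W) (B : Term (Option V)) :
    map f (lam B) = lam (map (Option.map f) B) := rfl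

@[simp] theorem bind_var (f : V → Term W) (v : V) : bind f (var v) = f v := rfl

@[simp] theorem bind_app (f : V → Term W) (M N : Term V) :
    bind f (app M N) = app (bind f M) (bind f N) := rfl

@[simp] theorem bind_lam (f : V → Term W) (B : Term (Option V)) :
    bind f (lam B) = lam (bind (up f) B) := rfl

@[simp] theorem mem_fv_var {w v : V} : w ∈ fv (var v) ↔ w = v := Iff.rfl

@[simp] theorem mem_fv_app {w : V} {M N : Term V} : w ∈ fv (app M N) ↔ w ∈ fv M ∨ w ∈ fv N :=
  Iff.rfl

@[simp] theorem mem_fv_lam {w : V} {B : Term (Option V)} : w ∈ fv (lam B) ↔ some w ∈ fv B :=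
  Iff.rfl

theorem map_congr : ∀ {V : Type u} {W : Type v} {f g : V → W} (M : Term V),
    (∀ v ∈ fv M, f v = g v) → map f M = map g M
  | _, _, _, _, var v, h => by simp [h v rfl]
  | _, _, _, _, app M N, h => by
      simp [map_congr M fun v hv => h v (Or.inl hv), map_congr N fun v hv => h v (Or.inr hv)]
  | _, _, _, _, lam B, h => by
      simp only [map_lam, lam.injEq]
      exact map_congr B fun o ho => by
        cases o with
        | none => rfl
        | some v => simp [h v ho]

theorem bind_congr : ∀ {V : Type u} {W : Type v} {f g : V → Term W} (M : Term V),
    (∀ v ∈ fv M, f v = g v) → bind f M = bind g M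
  | _, _, _, _, var v, h => h v rfl
  | _, _, _, _, app M N, h => by
      simp [bind_congr M fun v hv => h v (Or.inl hv), bind_congr N fun v hv => h v (Or.inr hv)]
  | _, _, _, _, lam B, h => by
      simp only [bind_lam, lam.injEq]
      exact bind_congr B fun o ho => by
        cases o with
        | none => rfl
        | some v => simp [h v ho]

theorem map_map : ∀ {V : Type u} {W : Type v} {X : Type w} (f : V → W) (g : W → X)
    (M : Term V), map g (map f M) = map (g ∘ f) M
  | _, _, _, _, _, var v => rfl
  | _, _, _, f, g, app M N => by simp [map_map f g M, map_map f g N]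
  | _, _, _, f, g, lam B => by simp only [map_lam, map_map _ _ B, Option.map_comp_map]

@[simp] theorem map_id : ∀ {V : Type u} (M : Term V), map id M = M
  | _, var v => rfl
  | _, app M N => by simp [map_id M, map_id N]
  | _, lam B => by simp only [map_lam, Option.map_id, map_id B]

theorem bind_map : ∀ {V : Type u} {W : Type v} {X : Type w} (f : V → W) (g : W → Term X)
    (M : Term V), bind g (map f M) = bind (g ∘ f) M
  | _, _, _, _, _, var v => rfl
  | _, _, _, f, g, app M N => by simp [bind_map f g M, bind_map f g N]
  | _, _, _, f, g, lam B => by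
      simp only [map_lam, bind_lam, bind_map _ _ B, lam.injEq]
      exact bind_congr B fun o _ => by cases o <;> rfl

theorem map_bind : ∀ {V : Type u} {W : Type v} {X : Type w} (f : V → Term W) (g : W → X)
    (M : Term V), map g (bind f M) = bind (map g ∘ f) M
  | _, _, _, _, _, var v => rfl
  | _, _, _, f, g, app M N => by simp [map_bind f g M, map_bind f g N]
  | _, _, _, f, g, lam B => by
      simp only [bind_lam, map_lam, map_bind _ _ B, lam.injEq]
      exact bind_congr B fun o _ => by cases o <;> simp [map_map]

@[simp] theorem bind_var_left : ∀ {V : Type u} (M : Term V), bind var M = M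
  | _, var v => rfl
  | _, app M N => by simp [bind_var_left M, bind_var_left N]
  | _, lam B => by
      simp only [bind_lam, lam.injEq]
      rw [bind_congr B (g := var) fun o _ => by cases o <;> rfl, bind_var_left B]

theorem bind_bind : ∀ {V : Type u} {W : Type v} {X : Type w} (f : V → Term W)
    (g : W → Term X) (M : Term V), bind g (bind f M) = bind (bind g ∘ f) M
  | _, _, _, _, _, var v => rfl
  | _, _, _, f, g, app M N => by simp [bind_bind f g M, bind_bind f g N]
  | _, _, _, f, g, lam B => by
      simp only [bind_lam, bind_bind _ _ B, lam.injEq]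
      exact bind_congr B fun o _ => by cases o <;> simp [bind_map, map_bind, Function.comp_def]

theorem map_eq_bind (f : V → W) (M : Term V) : map f M = bind (var ∘ f) M := by
  rw [← bind_map, bind_var_left]

theorem mem_fv_map : ∀ {V : Type u} {W : Type v} (f : V → W) (M : Term V) (w : W),
    w ∈ fv (map f M) ↔ ∃ v ∈ fv M, f v = w
  | _, _, _, var v, w => by simp [eq_comm]
  | _, _, f, app M N, w => by simp [mem_fv_map f M, mem_fv_map f N, or_and_right, exists_or]
  | _, _, f, lam B, w => by simp [mem_fv_map _ B]

theorem mem_fv_bind : ∀ {V : Type u} {W : Type v} (f : V → Term W) (M : Term V) (w : W),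
    w ∈ fv (bind f M) ↔ ∃ v ∈ fv M, w ∈ fv (f v)
  | _, _, _, var v, w => by simp
  | _, _, f, app M N, w => by simp [mem_fv_bind f M, mem_fv_bind f N, or_and_right, exists_or]
  | _, _, f, lam B, w => by simp [mem_fv_bind _ B, Option.exists, mem_fv_map]

theorem fv_finite : ∀ {V : Type u} (M : Term V), (fv M).Finite
  | _, var v => Set.finite_singleton v
  | _, app M N => (fv_finite M).union (fv_finite N)
  | _, lam B => (fv_finite B).preimage (Option.some_injective _).injOn

theorem map_injective : ∀ {V : Type u} {W : Type v} {f : V → W}, Function.Injective f →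
    Function.Injective (map f)
  | _, _, _, hf, var v, var w, h => by simpa using hf (var.inj h)
  | _, _, _, hf, app M N, app M' N', h => by
      simp only [map_app, app.injEq] at h
      rw [map_injective hf h.1, map_injective hf h.2]
  | _, _, _, hf, lam B, lam B', h => by
      simp only [map_lam, lam.injEq] at h
      rw [map_injective (Option.map_injective hf) h]
  | _, _, _, _, var _, app _ _, h | _, _, _, _, var _, lam _, h
  | _, _, _, _, app _ _, var _, h | _, _, _, _, app _ _, lam _, h
  | _, _, _, _, lam _, var _, h | _, _, _, _, lam _, app _ _, h => by simp at h

theorem exists_map_eq_of_fv_subset_range : ∀ {V : Type u} {W : Type v} (f : V → W)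
    (M : Term W), fv M ⊆ Set.range f → ∃ N, map f N = M
  | _, _, f, var w, h => by
      obtain ⟨v, rfl⟩ := h rfl
      exact ⟨var v, rfl⟩
  | _, _, f, app M N, h => by
      obtain ⟨M₀, rfl⟩ := exists_map_eq_of_fv_subset_range f M fun w hw => h (Or.inl hw)
      obtain ⟨N₀, rfl⟩ := exists_map_eq_of_fv_subset_range f N fun w hw => h (Or.inr hw)
      exact ⟨app M₀ N₀, rfl⟩
  | _, _, f, lam B, h => by
      obtain ⟨B₀, rfl⟩ := exists_map_eq_of_fv_subset_range (Option.map f) B fun o ho => by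
        cases o with
        | none => exact ⟨none, rfl⟩
        | some w => obtain ⟨v, rfl⟩ := h ho; exact ⟨some v, rfl⟩
      exact ⟨lam B₀, rfl⟩

theorem map_some_ne_var_none (M : Term V) : map some M ≠ var none := by
  cases M <;> simp

theorem bind_up_map_some (f : V → Term W) (M : Term V) :
    bind (up f) (map some M) = map some (bind f M) := by
  rw [bind_map, map_bind]; rfl

theorem map_option_map_map_some (f : V → W) (M : Term V) :
    map (Option.map f) (map some M) = map some (map f M) := by
  rw [map_map, map_map]; rfl

theorem exists_of_bind_up_eq_map_some {f : V → Term W} {C : Term (Option V)} {X : Term W}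
    (h : bind (up f) C = map some X) : ∃ C₀, C = map some C₀ ∧ X = bind f C₀ := by
  have hC : fv C ⊆ Set.range some := by
    rintro (_ | v) hv
    · have : none ∈ fv (map some X) := h ▸ (mem_fv_bind _ _ _).2 ⟨none, hv, rfl⟩
      simp [mem_fv_map] at this
    · exact ⟨v, rfl⟩
  obtain ⟨C₀, rfl⟩ := exists_map_eq_of_fv_subset_range some C hC
  rw [bind_up_map_some] at h
  exact ⟨C₀, rfl, map_injective (Option.some_injective _) h.symm⟩

theorem exists_of_map_option_map_eq_map_some {f : V → W} {C : Term (Option V)} {X : Term W}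
    (h : map (Option.map f) C = map some X) : ∃ C₀, C = map some C₀ ∧ X = map f C₀ := by
  have h' : bind (up (var ∘ f)) C = map some X := by
    rw [← h, map_eq_bind]
    exact bind_congr C fun o _ => by cases o <;> rfl
  obtain ⟨C₀, rfl, rfl⟩ := exists_of_bind_up_eq_map_some h'
  exact ⟨C₀, rfl, (map_eq_bind f C₀).symm⟩

/-- The η-expansion `λx. M x` of `M`. -/
abbrev etaExp (M : Term V) : Term V := lam (app (map some M) (var none))

theorem etaExp_injective : Function.Injective (etaExp (V := V)) := fun M N h => by
  simp only [lam.injEq, app.injEq, and_true] at h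
  exact map_injective (Option.some_injective _) h

@[simp] theorem map_etaExp (f : V → W) (M : Term V) : map f (etaExp M) = etaExp (map f M) := by
  simp [map_option_map_map_some]

@[simp] theorem bind_etaExp (f : V → Term W) (M : Term V) :
    bind f (etaExp M) = etaExp (bind f M) := by
  simp [bind_up_map_some]

@[simp] theorem instantiate_app (X Y : Term (Option V)) (P : Term V) :
    instantiate (app X Y) P = app (instantiate X P) (instantiate Y P) := rfl

@[simp] theorem instantiate_var_none (P : Term V) : instantiate (var none) P = P := rfl

@[simp] theorem instantiate_map_some (M P : Term V) : instantiate (map some M) P = M := by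
  rw [instantiate, bind_map]; exact bind_var_left M

theorem instantiate_map_option_map_some_var_none (A : Term (Option V)) :
    instantiate (map (Option.map some) A) (var none) = A := by
  rw [instantiate, bind_map, bind_congr A (g := var) fun o _ => by cases o <;> rfl, bind_var_left]

theorem map_instantiate (f : V → W) (B : Term (Option V)) (P : Term V) :
    map f (instantiate B P) = instantiate (map (Option.map f) B) (map f P) := by
  rw [instantiate, instantiate, map_bind, bind_map]
  exact bind_congr B fun o _ => by cases o <;> rfl

theorem bind_instantiate (f : V → Term W) (B : Term (Option V)) (P : Term V) :
    bind f (instantiate B P) = instantiate (bind (up f) B) (bind f P) := by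
  rw [instantiate, instantiate, bind_bind, bind_bind]
  refine bind_congr B fun o _ => ?_
  cases o with
  | none => rfl
  | some v => simp [bind_map, Function.comp_def]

theorem map_eq_var {f : V → W} {M : Term V} {w : W} (h : map f M = var w) :
    ∃ v, M = var v ∧ f v = w := by
  cases M <;> simp_all

theorem map_eq_app {f : V → W} {M : Term V} {P Q : Term W} (h : map f M = app P Q) :
    ∃ P₀ Q₀, M = app P₀ Q₀ ∧ map f P₀ = P ∧ map f Q₀ = Q := by
  cases M <;> simp_all

theorem map_eq_lam {f : V → W} {M : Term V} {B : Term (Option W)} (h : map f M = lam B) :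
    ∃ B₀, M = lam B₀ ∧ map (Option.map f) B₀ = B := by
  cases M <;> simp_all

theorem map_eq_etaExp {f : V → W} {M : Term V} {X : Term W} (h : map f M = etaExp X) :
    ∃ X₀, M = etaExp X₀ ∧ map f X₀ = X := by
  obtain ⟨B₀, rfl, hB⟩ := map_eq_lam h
  obtain ⟨C₁, C₂, rfl, hC₁, hC₂⟩ := map_eq_app hB
  obtain ⟨o, rfl, ho⟩ := map_eq_var hC₂
  obtain ⟨X₀, rfl, rfl⟩ := exists_of_map_option_map_eq_map_some hC₁
  rw [Option.map_eq_none_iff] at ho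
  exact ⟨X₀, by rw [ho], rfl⟩

theorem exists_of_bind_up_eq_etaBody {f : V → Term W} {C : Term (Option V)} {X : Term W}
    (h : bind (up f) C = app (map some X) (var none)) :
    ∃ C₀, C = app (map some C₀) (var none) ∧ X = bind f C₀ := by
  cases C with
  | var o =>
      rcases o with _ | v
      · cases h
      · obtain ⟨_, _, _, _, hQ⟩ := map_eq_app h
        exact absurd hQ (map_some_ne_var_none _)
  | lam _ => cases h
  | app C₁ C₂ =>
      simp only [bind_app, app.injEq] at h
      obtain ⟨C₀, rfl, rfl⟩ := exists_of_bind_up_eq_map_some h.1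
      refine ⟨C₀, ?_, rfl⟩
      cases C₂ with
      | var o =>
          rcases o with _ | v
          · rfl
          · exact absurd h.2 (map_some_ne_var_none _)
      | app _ _ | lam _ => cases h.2

end Substitution

/-- One-step β-reduction, together with η-reduction when `η = true`. -/
inductive OneStep (η : Bool) : {W : Type u} → Term W → Term W → Prop
  | beta {W : Type u} (B : Term (Option W)) (P : Term W) :
      OneStep η (app (lam B) P) (instantiate B P)
  | eta {W : Type u} (M : Term W) : η = true → OneStep η (etaExp M) M
  | appL {W : Type u} {M M' N : Term W} : OneStep η M M' → OneStep η (app M N) (app M' N)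
  | appR {W : Type u} {M N N' : Term W} : OneStep η N N' → OneStep η (app M N) (app M N')
  | lam {W : Type u} {B B' : Term (Option W)} : OneStep η B B' → OneStep η (lam B) (lam B')

abbrev MultiStep (η : Bool) {W : Type u} : Term W → Term W → Prop :=
  Relation.ReflTransGen (OneStep η (W := W))

abbrev Conv (η : Bool) {W : Type u} : Term W → Term W → Prop :=
  Relation.EqvGen (OneStep η (W := W))

namespace OneStep

variable {η : Bool} {V W : Type u}

theorem map {M N : Term V} (h : OneStep η M N) (f : V → W) :
    OneStep η (Term.map f M) (Term.map f N) := by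
  induction h generalizing W with
  | beta B P => rw [map_instantiate]; exact beta _ _
  | eta M hη => rw [map_etaExp]; exact eta _ hη
  | appL _ ih => exact appL (ih f)
  | appR _ ih => exact appR (ih f)
  | lam _ ih => exact lam (ih _)

theorem exists_of_map {f : V → W} {M : Term V} {Z : Term W} (h : OneStep η (Term.map f M) Z) :
    ∃ N, Z = Term.map f N ∧ OneStep η M N := by
  generalize hA : Term.map f M = A at h
  induction h generalizing V with
  | beta B P =>
      obtain ⟨L, P₀, rfl, hL, rfl⟩ := map_eq_app hA
      obtain ⟨B₀, rfl, rfl⟩ := map_eq_lam hL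
      exact ⟨_, (map_instantiate _ _ _).symm, beta _ _⟩
  | eta X hη =>
      obtain ⟨X₀, rfl, rfl⟩ := map_eq_etaExp hA
      exact ⟨X₀, rfl, eta _ hη⟩
  | appL _ ih =>
      obtain ⟨M₁, M₂, rfl, h₁, rfl⟩ := map_eq_app hA
      obtain ⟨N₁, rfl, h⟩ := ih h₁
      exact ⟨app N₁ M₂, rfl, appL h⟩
  | appR _ ih =>
      obtain ⟨M₁, M₂, rfl, rfl, h₂⟩ := map_eq_app hA
      obtain ⟨N₂, rfl, h⟩ := ih h₂
      exact ⟨app M₁ N₂, rfl, appR h⟩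
  | lam _ ih =>
      obtain ⟨B₀, rfl, hB⟩ := map_eq_lam hA
      obtain ⟨B₁, rfl, h⟩ := ih hB
      exact ⟨Term.lam B₁, rfl, lam h⟩

theorem not_var {v : V} {Z : Term V} : ¬ OneStep η (var v) Z := nofun

theorem app_inv {M₁ M₂ Z : Term V} (h : OneStep η (app M₁ M₂) Z) :
    (∃ B, M₁ = Term.lam B ∧ Z = instantiate B M₂) ∨
    (∃ M₁', Z = app M₁' M₂ ∧ OneStep η M₁ M₁') ∨
    (∃ M₂', Z = app M₁ M₂' ∧ OneStep η M₂ M₂') := by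
  cases h with
  | beta B _ => exact Or.inl ⟨B, rfl, rfl⟩
  | appL h => exact Or.inr (Or.inl ⟨_, rfl, h⟩)
  | appR h => exact Or.inr (Or.inr ⟨_, rfl, h⟩)

theorem lam_inv {B : Term (Option V)} {Z : Term V} (h : OneStep η (Term.lam B) Z) :
    (∃ B', Z = Term.lam B' ∧ OneStep η B B') ∨ (∃ M, B = app (Term.map some M) (var none)) := by
  cases h with
  | eta _ _ => exact Or.inr ⟨_, rfl⟩
  | lam h => exact Or.inl ⟨_, rfl, h⟩

theorem exists_bind_of_mem_fv {V : Type v} {f : V → Term W} {C : Term V} {x : V} {Z : Term W}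
    (hx : x ∈ fv C) (hZ : OneStep η (f x) Z) : ∃ Z', OneStep η (bind f C) Z' := by
  induction C generalizing W with
  | var v => exact ⟨_, Set.mem_singleton_iff.1 hx ▸ hZ⟩
  | app C₁ C₂ ih₁ ih₂ =>
      rcases hx with hx | hx
      · obtain ⟨_, h⟩ := ih₁ hx hZ
        exact ⟨_, h.appL⟩
      · obtain ⟨_, h⟩ := ih₂ hx hZ
        exact ⟨_, h.appR⟩
  | lam C₀ ih =>
      obtain ⟨_, h⟩ := ih (f := up f) hx (hZ.map some)
      exact ⟨_, h.lam⟩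

end OneStep

namespace MultiStep

variable {η : Bool} {V W : Type u}

theorem app {M M' N N' : Term V} (h₁ : MultiStep η M M') (h₂ : MultiStep η N N') :
    MultiStep η (.app M N) (.app M' N') :=
  (h₁.lift (Term.app · N) fun _ _ h => h.appL).trans (h₂.lift (Term.app M') fun _ _ h => h.appR)

theorem lam {B B' : Term (Option V)} (h : MultiStep η B B') : MultiStep η (.lam B) (.lam B') :=
  h.lift Term.lam fun _ _ h => h.lam

theorem map {M N : Term V} (h : MultiStep η M N) (f : V → W) :
    MultiStep η (Term.map f M) (Term.map f N) :=
  h.lift (Term.map f) fun _ _ h => h.map f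

end MultiStep

namespace Conv

variable {η : Bool} {V W : Type u}

protected theorem symm {M N : Term V} (h : Conv η M N) : Conv η N M :=
  Relation.EqvGen.symm _ _ h

protected theorem trans {M N P : Term V} (h₁ : Conv η M N) (h₂ : Conv η N P) : Conv η M P :=
  Relation.EqvGen.trans _ _ _ h₁ h₂

theorem of_multiStep {M N : Term V} (h : MultiStep η M N) : Conv η M N :=
  Relation.EqvGen.reflTransGen_le_eqvGen _ _ _ h

theorem lift {f : Term V → Term W} (hf : ∀ M N, OneStep η M N → OneStep η (f M) (f N))
    {M N : Term V} (h : Conv η M N) : Conv η (f M) (f N) := by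
  induction h with
  | rel _ _ h => exact .rel _ _ (hf _ _ h)
  | refl => exact .refl _
  | symm _ _ _ ih => exact ih.symm
  | trans _ _ _ _ _ ih₁ ih₂ => exact ih₁.trans ih₂

theorem appL {M M' : Term V} (h : Conv η M M') (N : Term V) : Conv η (.app M N) (.app M' N) :=
  h.lift fun _ _ h => h.appL

theorem appR (M : Term V) {N N' : Term V} (h : Conv η N N') : Conv η (.app M N) (.app M N') :=
  h.lift fun _ _ h => h.appR

theorem lam {B B' : Term (Option V)} (h : Conv η B B') : Conv η (.lam B) (.lam B') :=
  h.lift fun _ _ h => h.lam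

theorem map {M N : Term V} (h : Conv η M N) (f : V → W) : Conv η (Term.map f M) (Term.map f N) :=
  h.lift fun _ _ h => h.map f

end Conv

section NamedBinders

variable {V W : Type u}

theorem abs_map_elim {τ : W → V} {v : V} {B : Term (Option W)}
    (hv : ∀ w, some w ∈ fv B → τ w ≠ v) :
    abs v (map (fun o => o.elim v τ) B) = map τ (lam B) := by
  rw [abs, map_map, map_lam]
  congr 1
  refine map_congr B fun o ho => ?_
  cases o with
  | none => simp
  | some w => simp [hv w ho]

theorem step_map_lam [Infinite V] {R : Term V → Term V → Prop} {τ : W → V}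
    {B B' : Term (Option W)} (h : ∀ τ' : Option W → V, Step R (map τ' B) (map τ' B')) :
    Step R (map τ (lam B)) (map τ (lam B')) := by
  obtain ⟨v, hv⟩ := ((((fv_finite B).preimage (Option.some_injective _).injOn).image τ).union
    (((fv_finite B').preimage (Option.some_injective _).injOn).image τ)).exists_notMem
  simp only [Set.mem_union, Set.mem_image, Set.mem_preimage, not_or, not_exists, not_and] at hv
  rw [← abs_map_elim hv.1, ← abs_map_elim hv.2]
  exact Step.abs v (h _)

theorem OneStep.step_map [Infinite V] {η : Bool} {A A' : Term W} (h : OneStep η A A')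
    (τ : W → V) : Step (if η then BetaEta else Beta) (Term.map τ A) (Term.map τ A') := by
  induction h with
  | beta B P =>
      have hβ : Beta (Term.map τ (app (.lam B) P)) (Term.map τ (instantiate B P)) :=
        ⟨_, _, rfl, map_instantiate _ _ _⟩
      cases η
      · exact .base hβ
      · exact .base (Or.inl hβ)
  | eta M hη =>
      subst hη
      exact .base (Or.inr (map_etaExp τ M))
  | appL _ ih => exact .appL (ih τ)
  | appR _ ih => exact .appR (ih τ)
  | lam _ ih => exact step_map_lam ih

theorem step_eq_oneStep [Infinite V] (η : Bool) :
    Step (if η then BetaEta else Beta) = OneStep η (W := V) := by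
  ext M N
  constructor
  · intro h
    induction h with
    | base hR =>
        cases η
        · obtain ⟨B, P, rfl, rfl⟩ := hR
          exact .beta B P
        · rcases hR with ⟨B, P, rfl, rfl⟩ | rfl
          · exact .beta B P
          · exact .eta _ rfl
    | appL _ ih => exact ih.appL
    | appR _ ih => exact ih.appR
    | abs v _ ih => exact (ih.map _).lam
  · intro h
    simpa using h.step_map id

end NamedBinders

inductive ParStep (η : Bool) : {W : Type u} → Term W → Term W → Prop
  | var {W : Type u} (v : W) : ParStep η (var v) (var v)
  | app {W : Type u} {M M' N N' : Term W} :
      ParStep η M M' → ParStep η N N' → ParStep η (app M N) (app M' N')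
  | lam {W : Type u} {B B' : Term (Option W)} : ParStep η B B' → ParStep η (lam B) (lam B')
  | beta {W : Type u} {B B' : Term (Option W)} {P P' : Term W} :
      ParStep η B B' → ParStep η P P' → ParStep η (app (lam B) P) (instantiate B' P')
  | eta {W : Type u} {M M' : Term W} : η = true → ParStep η M M' → ParStep η (etaExp M) M'

namespace ParStep

variable {η : Bool} {V W : Type u}

protected theorem refl : ∀ {V : Type u} (M : Term V), ParStep η M M
  | _, .var v => var v
  | _, .app M N => app (ParStep.refl M) (ParStep.refl N)
  | _, .lam B => lam (ParStep.refl B)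

theorem map {M N : Term V} (h : ParStep η M N) (f : V → W) :
    ParStep η (Term.map f M) (Term.map f N) := by
  induction h generalizing W with
  | var v => exact var _
  | app _ _ ih₁ ih₂ => exact app (ih₁ f) (ih₂ f)
  | lam _ ih => exact lam (ih _)
  | beta _ _ ih₁ ih₂ => rw [map_instantiate]; exact beta (ih₁ _) (ih₂ f)
  | eta hη _ ih => rw [map_etaExp]; exact eta hη (ih f)

theorem forall_up {f g : V → Term W} (hfg : ∀ v, ParStep η (f v) (g v)) (o : Option V) :
    ParStep η (up f o) (up g o) := by
  cases o with
  | none => exact var none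
  | some v => exact (hfg v).map some

theorem bind {M M' : Term V} (h : ParStep η M M') {f g : V → Term W}
    (hfg : ∀ v, ParStep η (f v) (g v)) : ParStep η (Term.bind f M) (Term.bind g M') := by
  induction h generalizing W with
  | var v => exact hfg v
  | app _ _ ih₁ ih₂ => exact app (ih₁ hfg) (ih₂ hfg)
  | lam _ ih => exact lam (ih (forall_up hfg))
  | beta _ _ ih₁ ih₂ =>
      rw [bind_app, bind_lam, bind_instantiate]
      exact beta (ih₁ (forall_up hfg)) (ih₂ hfg)
  | eta hη _ ih => rw [bind_etaExp]; exact eta hη (ih hfg)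

theorem instantiate {B B' : Term (Option V)} {P P' : Term V} (hB : ParStep η B B')
    (hP : ParStep η P P') : ParStep η (Term.instantiate B P) (Term.instantiate B' P') :=
  hB.bind fun o => by
    cases o with
    | none => exact hP
    | some v => exact var v

theorem exists_of_map {f : V → W} {M : Term V} {Z : Term W} (h : ParStep η (Term.map f M) Z) :
    ∃ N, Z = Term.map f N ∧ ParStep η M N := by
  generalize hA : Term.map f M = A at h
  induction h generalizing V with
  | var v =>
      obtain ⟨v, rfl, rfl⟩ := map_eq_var hA
      exact ⟨_, rfl, var v⟩
  | app _ _ ih₁ ih₂ =>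
      obtain ⟨M₁, M₂, rfl, h₁, h₂⟩ := map_eq_app hA
      obtain ⟨N₁, rfl, h₁⟩ := ih₁ h₁
      obtain ⟨N₂, rfl, h₂⟩ := ih₂ h₂
      exact ⟨.app N₁ N₂, rfl, app h₁ h₂⟩
  | lam _ ih =>
      obtain ⟨B₀, rfl, hB⟩ := map_eq_lam hA
      obtain ⟨B₁, rfl, h⟩ := ih hB
      exact ⟨.lam B₁, rfl, lam h⟩
  | beta _ _ ih₁ ih₂ =>
      obtain ⟨L, P₀, rfl, hL, hP⟩ := map_eq_app hA
      obtain ⟨B₀, rfl, hB⟩ := map_eq_lam hL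
      obtain ⟨B₁, rfl, h₁⟩ := ih₁ hB
      obtain ⟨P₁, rfl, h₂⟩ := ih₂ hP
      exact ⟨_, (map_instantiate _ _ _).symm, beta h₁ h₂⟩
  | eta hη _ ih =>
      obtain ⟨X₀, rfl, hX⟩ := map_eq_etaExp hA
      obtain ⟨N, rfl, h⟩ := ih hX
      exact ⟨N, rfl, eta hη h⟩

theorem lam_inv {B : Term (Option V)} {P : Term V} (h : ParStep η (.lam B) P) :
    (∃ B', P = .lam B' ∧ ParStep η B B') ∨
    (η = true ∧ ∃ M, B = .app (Term.map some M) (.var none) ∧ ParStep η M P) := by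
  cases h with
  | lam h => exact Or.inl ⟨_, rfl, h⟩
  | eta hη h => exact Or.inr ⟨hη, _, rfl, h⟩

theorem etaBody_inv {Q : Term V} {B : Term (Option V)}
    (h : ParStep η (.app (Term.map some Q) (.var none)) B) :
    (∃ Q', B = .app (Term.map some Q') (.var none) ∧ ParStep η Q Q') ∨
    (∃ Q₀ Q₀', Q = .lam Q₀ ∧ ParStep η Q₀ Q₀' ∧ B = Q₀') := by
  generalize hA : Term.map some Q = A at h
  cases h with
  | app h₁ h₂ =>
      cases h₂
      obtain ⟨Q', rfl, hQ⟩ := exists_of_map (hA ▸ h₁)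
      exact Or.inl ⟨Q', rfl, hQ⟩
  | beta h₁ h₂ =>
      cases h₂
      obtain ⟨Q₀, rfl, rfl⟩ := map_eq_lam hA
      obtain ⟨Q₀', rfl, hQ⟩ := exists_of_map h₁
      exact Or.inr ⟨Q₀, Q₀', rfl, hQ, instantiate_map_option_map_some_var_none Q₀'⟩

theorem of_oneStep {M N : Term V} (h : OneStep η M N) : ParStep η M N := by
  induction h with
  | beta B P => exact beta (.refl B) (.refl P)
  | eta M hη => exact eta hη (.refl M)
  | appL _ ih => exact app ih (.refl _)
  | appR _ ih => exact app (.refl _) ih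
  | lam _ ih => exact lam ih

theorem multiStep {M N : Term V} (h : ParStep η M N) : MultiStep η M N := by
  induction h with
  | var v => rfl
  | app _ _ ih₁ ih₂ => exact ih₁.app ih₂
  | lam _ ih => exact ih.lam
  | beta _ _ ih₁ ih₂ => exact (ih₁.lam.app ih₂).tail (OneStep.beta _ _)
  | eta hη _ ih => exact ((ih.map some).app .refl).lam.tail (OneStep.eta _ hη)

end ParStep

def size : {V : Type u} → Term V → ℕ
  | _, var _ => 1
  | _, app M N => size M + size N + 1
  | _, lam B => size B + 1

theorem size_map : ∀ {V W : Type u} (f : V → W) (M : Term V), size (map f M) = size M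
  | _, _, _, var _ => rfl
  | _, _, f, app M N => by simp [size, size_map f M, size_map f N]
  | _, _, f, lam B => by simp [size, size_map _ B]

/-- Takahashi's complete development. -/
inductive Develops (η : Bool) : {W : Type u} → Term W → Term W → Prop
  | var {W : Type u} (v : W) : Develops η (var v) (var v)
  | app {W : Type u} {M M' N N' : Term W} :
      (∀ B, M ≠ lam B) → Develops η M M' → Develops η N N' → Develops η (app M N) (app M' N')
  | beta {W : Type u} {B B' : Term (Option W)} {P P' : Term W} :
      Develops η B B' → Develops η P P' → Develops η (app (lam B) P) (instantiate B' P')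
  | lam {W : Type u} {B B' : Term (Option W)} :
      (η = true → ∀ M, B ≠ app (map some M) (var none)) → Develops η B B' →
        Develops η (lam B) (lam B')
  | eta {W : Type u} {M M' : Term W} : η = true → Develops η M M' → Develops η (etaExp M) M'

theorem exists_develops {η : Bool} : ∀ {V : Type u} (M : Term V), ∃ N, Develops η M N
  | _, .var v => ⟨_, .var v⟩
  | _, .app (.lam B) P =>
      have ⟨_, hB⟩ := exists_develops B
      have ⟨_, hP⟩ := exists_develops P
      ⟨_, .beta hB hP⟩
  | _, .app (.var v) P =>
      have ⟨_, hP⟩ := exists_develops P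
      ⟨_, .app nofun (.var v) hP⟩
  | _, .app (.app M₁ M₂) P =>
      have ⟨_, hM⟩ := exists_develops (.app M₁ M₂)
      have ⟨_, hP⟩ := exists_develops P
      ⟨_, .app nofun hM hP⟩
  | _, .lam B => by
      by_cases hB : η = true ∧ ∃ M, B = .app (map some M) (.var none)
      · obtain ⟨hη, M, rfl⟩ := hB
        obtain ⟨N, hN⟩ := exists_develops M
        exact ⟨N, .eta hη hN⟩
      · obtain ⟨B', hB'⟩ := exists_develops B
        exact ⟨_, .lam (fun hη M hM => hB ⟨hη, M, hM⟩) hB'⟩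
termination_by _ M => size M
decreasing_by all_goals (subst_vars; simp only [size, size_map]; omega)

theorem Develops.parStep_of_parStep {η : Bool} {V : Type u} {M N P : Term V}
    (hd : Develops η M N) (hp : ParStep η M P) : ParStep η P N := by
  induction hd with
  | var v => cases hp; exact .var v
  | app hnl _ _ ih₁ ih₂ =>
      cases hp with
      | app h₁ h₂ => exact .app (ih₁ h₁) (ih₂ h₂)
      | beta => exact absurd rfl (hnl _)
  | beta _ _ ihB ihP =>
      cases hp with
      | app h₁ h₂ =>
          rcases h₁.lam_inv with ⟨B₂, rfl, hB₂⟩ | ⟨hη, Q, rfl, hQ⟩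
          · exact .beta (ihB hB₂) (ihP h₂)
          · simpa using (ihB ((hQ.map some).app (.var none))).instantiate (ihP h₂)
      | beta h₁ h₂ => exact (ihB h₁).instantiate (ihP h₂)
  | lam hB _ ih =>
      rcases hp.lam_inv with ⟨B₂, rfl, hB₂⟩ | ⟨hη, M, hM, _⟩
      · exact .lam (ih hB₂)
      · exact absurd hM (hB hη M)
  | eta hη _ ih =>
      rcases hp.lam_inv with ⟨B₂, rfl, hB₂⟩ | ⟨_, M, hM, h⟩
      · rcases ParStep.etaBody_inv hB₂ with ⟨Q', rfl, hQ⟩ | ⟨Q₀, Q₀', rfl, hQ, rfl⟩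
        · exact .eta hη (ih hQ)
        · exact ih hQ.lam
      · rw [etaExp_injective (congrArg Term.lam hM)] at ih
        exact ih h

theorem ParStep.diamond {η : Bool} {V : Type u} {M P₁ P₂ : Term V} (h₁ : ParStep η M P₁)
    (h₂ : ParStep η M P₂) : ∃ Q, ParStep η P₁ Q ∧ ParStep η P₂ Q :=
  have ⟨N, hN⟩ := exists_develops (η := η) M
  ⟨N, hN.parStep_of_parStep h₁, hN.parStep_of_parStep h₂⟩

theorem MultiStep.of_conv_of_normal {η : Bool} {V : Type u} {M N : Term V} (h : Conv η M N)
    (hN : ∀ Z, ¬ OneStep η N Z) : MultiStep η M N := by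
  have hjoin := Relation.equivalence_join_reflTransGen (r := ParStep η (W := V))
    fun _ _ _ h₁ h₂ =>
      have ⟨Q, hQ₁, hQ₂⟩ := h₁.diamond h₂
      ⟨Q, .single hQ₁, .single hQ₂⟩
  have := hjoin.isEquiv
  have hpar : Relation.ReflTransGen (ParStep η) ≤ MultiStep η (W := V) :=
    Relation.reflTransGen_le_of_le fun _ _ => ParStep.multiStep
  obtain ⟨X, hMX, hNX⟩ := Relation.EqvGen.eqvGen_le (r' := Relation.Join (Relation.ReflTransGen _))
    (fun a b hab => ⟨b, .single (ParStep.of_oneStep hab), .refl⟩) M N h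
  obtain rfl | ⟨Z, hZ, _⟩ := (hpar _ _ hNX).cases_head
  · exact hpar _ _ hMX
  · exact absurd hZ (hN Z)

section Theta

variable {η : Bool} {V : Type u}

theorem thetaHalf_normal {Z : Term V} : ¬ OneStep η thetaHalf Z := by
  intro h
  cases h with
  | lam h =>
      rcases h.lam_inv with ⟨_, _, h⟩ | ⟨_, hM⟩
      · rcases h.app_inv with ⟨_, ⟨⟩, _⟩ | ⟨_, _, h⟩ | ⟨_, _, h⟩
        · exact OneStep.not_var h
        rcases h.app_inv with ⟨_, ⟨⟩, _⟩ | ⟨_, _, h⟩ | ⟨_, _, h⟩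
        · rcases h.app_inv with ⟨_, ⟨⟩, _⟩ | ⟨_, _, h⟩ | ⟨_, _, h⟩ <;> exact OneStep.not_var h
        · exact OneStep.not_var h
      · simp [eq_comm, map_some_ne_var_none] at hM

theorem theta_oneStep {Z : Term V} (h : OneStep η Theta Z) :
    Z = lam (app (var none) (app (map some Theta) (var none))) := by
  rcases h.app_inv with ⟨B, hB, rfl⟩ | ⟨_, _, h⟩ | ⟨_, _, h⟩
  · cases hB; rfl
  all_goals exact absurd h thetaHalf_normal

/-- The bodies `A` of the abstractions `λA` to which `Θ` reduces: `Θ` first unfolds to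
`λy. y (Θ y)`, after which the inner copy of `Θ` may unfold again. -/
inductive ThetaBody : {V : Type u} → Term (Option V) → Prop
  | unfold {V : Type u} : ThetaBody (V := V) (app (var none) (app (map some Theta) (var none)))
  | unfoldLam {V : Type u} {A : Term (Option V)} :
      ThetaBody A → ThetaBody (app (var none) (app (map some (lam A)) (var none)))
  | appVar {V : Type u} {A : Term (Option V)} : ThetaBody A → ThetaBody (app (var none) A)

def IsThetaReduct (T : Term V) : Prop := T = Theta ∨ ∃ A, ThetaBody A ∧ T = lam A

theorem ThetaBody.ne_etaBody {A : Term (Option V)} (hA : ThetaBody A) (M : Term V) :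
    A ≠ app (map some M) (var none) := by
  cases hA <;> simp [(map_some_ne_var_none M).symm]

theorem ThetaBody.oneStep {A A' : Term (Option V)} (hA : ThetaBody A) (h : OneStep η A A') :
    ThetaBody A' := by
  induction hA generalizing A' with
  | unfold =>
      rcases h.app_inv with ⟨_, ⟨⟩, _⟩ | ⟨_, _, h₁⟩ | ⟨X, rfl, h₁⟩
      · exact absurd h₁ OneStep.not_var
      rcases h₁.app_inv with ⟨_, ⟨⟩, _⟩ | ⟨_, rfl, h₂⟩ | ⟨_, _, h₂⟩
      · obtain ⟨T, rfl, hT⟩ := OneStep.exists_of_map h₂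
        rw [theta_oneStep hT]
        exact .unfoldLam .unfold
      · exact absurd h₂ OneStep.not_var
  | @unfoldLam A hA ih =>
      rcases h.app_inv with ⟨_, ⟨⟩, _⟩ | ⟨_, _, h₁⟩ | ⟨X, rfl, h₁⟩
      · exact absurd h₁ OneStep.not_var
      rcases h₁.app_inv with ⟨B, hB, rfl⟩ | ⟨_, rfl, h₂⟩ | ⟨_, _, h₂⟩
      · cases hB
        rw [instantiate_map_option_map_some_var_none]
        exact .appVar hA
      · obtain ⟨T, rfl, hT⟩ := OneStep.exists_of_map h₂
        rcases hT.lam_inv with ⟨A', rfl, hA'⟩ | ⟨M, hM⟩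
        · exact .unfoldLam (ih hA')
        · exact absurd hM (hA.ne_etaBody M)
      · exact absurd h₂ OneStep.not_var
  | appVar _ ih =>
      rcases h.app_inv with ⟨_, ⟨⟩, _⟩ | ⟨_, _, h₁⟩ | ⟨X, rfl, h₁⟩
      · exact absurd h₁ OneStep.not_var
      · exact .appVar (ih h₁)

theorem IsThetaReduct.oneStep {T T' : Term V} (hT : IsThetaReduct T) (h : OneStep η T T') :
    IsThetaReduct T' := by
  rcases hT with rfl | ⟨A, hA, rfl⟩
  · exact Or.inr ⟨_, .unfold, theta_oneStep h⟩
  · rcases h.lam_inv with ⟨A', rfl, hA'⟩ | ⟨M, hM⟩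
    · exact Or.inr ⟨A', hA.oneStep hA', rfl⟩
    · exact absurd hM (hA.ne_etaBody M)

end Theta

section Fill

variable {η : Bool} {W : Type u} {L : Type v} {g h : L → Term W}

/-- Plugs `g i` into each hole `Sum.inr i` of `C`. -/
def fill (g : L → Term W) (C : Term (W ⊕ L)) : Term W := bind (Sum.elim var g) C

@[simp] theorem fill_var_inr (g : L → Term W) (i : L) : fill g (var (.inr i)) = g i := rfl

@[simp] theorem fill_app (g : L → Term W) (C D : Term (W ⊕ L)) :
    fill g (app C D) = app (fill g C) (fill g D) := rfl

@[simp] theorem fill_lam (g : L → Term W) (C : Term (Option (W ⊕ L))) :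
    fill g (lam C) = lam (bind (up (Sum.elim var g)) C) := rfl

@[simp] theorem fill_map_inl (g : L → Term W) (M : Term W) : fill g (map .inl M) = M := by
  rw [fill, bind_map]; exact bind_var_left M

theorem map_fill {X : Type u} (f : W → X) (g : L → Term W) (C : Term (W ⊕ L)) :
    map f (fill g C) = fill (map f ∘ g) (map (Sum.map f id) C) := by
  rw [fill, fill, map_bind, bind_map]
  exact bind_congr C fun x _ => by cases x <;> rfl

/-- Under a binder, the holes are re-read as holes of a term over `Option W`. -/
theorem bind_up_eq_fill (g : L → Term W) (C : Term (Option (W ⊕ L))) :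
    bind (up (Sum.elim var g)) C =
      fill (map some ∘ g) (map (fun o => o.elim (.inl none) (Sum.map some id)) C) := by
  rw [fill, bind_map]
  exact bind_congr C fun o _ => by rcases o with _ | _ | _ <;> rfl

theorem fill_lam_map (g : L → Term W) (D : Term (Option W ⊕ L)) :
    fill g (lam (map (Sum.elim (Option.map .inl) (some ∘ .inr)) D)) =
      lam (fill (map some ∘ g) D) := by
  rw [fill, bind_lam, bind_map, fill]
  exact congrArg Term.lam <| bind_congr D fun x _ => by rcases x with (_ | _) | _ <;> rfl

/-- Every step out of a hole filled by `g` is matched, up to conversion, by the same hole filled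
by `h`. -/
def Simulates (η : Bool) (g h : L → Term W) : Prop :=
  ∀ i Z, OneStep η (g i) Z → ∃ C, Z = fill g C ∧ Conv η (h i) (fill h C)

theorem Simulates.map {X : Type u} (hs : Simulates η g h) (f : W → X) :
    Simulates η (Term.map f ∘ g) (Term.map f ∘ h) := by
  intro i Z hZ
  obtain ⟨Z₀, rfl, hZ₀⟩ := OneStep.exists_of_map hZ
  obtain ⟨C, rfl, hC⟩ := hs i Z₀ hZ₀
  exact ⟨Term.map (Sum.map f id) C, map_fill f g C, map_fill f h C ▸ hC.map f⟩

theorem OneStep.exists_fill_var (hs : Simulates η g h) {x : W ⊕ L} {S' : Term W}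
    (hS : OneStep η (fill g (var x)) S') :
    ∃ C', S' = fill g C' ∧ Conv η (fill h (var x)) (fill h C') := by
  rcases x with w | i
  · exact absurd hS OneStep.not_var
  · exact hs i S' hS

theorem OneStep.exists_fill (hs : Simulates η g h) (hg : ∀ i B, g i ≠ Term.lam B)
    {C : Term (W ⊕ L)} {S' : Term W} (hS : OneStep η (fill g C) S') :
    ∃ C', S' = fill g C' ∧ Conv η (fill h C) (fill h C') := by
  generalize hS₀ : fill g C = S at hS
  induction hS with
  | beta B P =>
      cases C with
      | var x => exact exists_fill_var hs (hS₀ ▸ .beta B P)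
      | lam _ => cases hS₀
      | app C₁ C₂ =>
          cases C₁ with
          | var x =>
              rcases x with w | i
              · cases hS₀
              · exact absurd (app.inj hS₀).1 (hg i B)
          | app _ _ => cases hS₀
          | lam C₀ =>
              simp only [fill_app, fill_lam, app.injEq, Term.lam.injEq] at hS₀
              obtain ⟨rfl, rfl⟩ := hS₀
              refine ⟨instantiate C₀ C₂, (bind_instantiate _ _ _).symm, .rel _ _ ?_⟩
              simp only [fill, bind_app, bind_lam, bind_instantiate]
              exact .beta _ _
  | eta X hη =>
      cases C with
      | var x => exact exists_fill_var hs (hS₀ ▸ .eta X hη)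
      | app _ _ => cases hS₀
      | lam C₀ =>
          simp only [fill_lam, etaExp, Term.lam.injEq] at hS₀
          obtain ⟨C₁, rfl, rfl⟩ := exists_of_bind_up_eq_etaBody hS₀
          refine ⟨C₁, rfl, .rel _ _ ?_⟩
          rw [fill, bind_etaExp]
          exact .eta _ hη
  | appL hM ih =>
      cases C with
      | var x => exact exists_fill_var hs (hS₀ ▸ hM.appL)
      | lam _ => cases hS₀
      | app C₁ C₂ =>
          obtain ⟨hC₁, rfl⟩ := app.inj hS₀
          obtain ⟨C₁', rfl, hC₁'⟩ := ih hs hg hC₁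
          exact ⟨app C₁' C₂, rfl, hC₁'.appL _⟩
  | appR hN ih =>
      cases C with
      | var x => exact exists_fill_var hs (hS₀ ▸ hN.appR)
      | lam _ => cases hS₀
      | app C₁ C₂ =>
          obtain ⟨rfl, hC₂⟩ := app.inj hS₀
          obtain ⟨C₂', rfl, hC₂'⟩ := ih hs hg hC₂
          exact ⟨app C₁ C₂', rfl, hC₂'.appR _⟩
  | lam hB ih =>
      cases C with
      | var x => exact exists_fill_var hs (hS₀ ▸ hB.lam)
      | app _ _ => cases hS₀
      | lam C₀ =>
          have hg' : ∀ i B, (Term.map some ∘ g) i ≠ Term.lam B := fun i B hB =>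
            have ⟨B₀, hB₀, _⟩ := map_eq_lam hB
            hg i B₀ hB₀
          obtain ⟨D', rfl, hD⟩ :=
            ih (hs.map some) hg' ((bind_up_eq_fill g C₀).symm.trans (Term.lam.inj hS₀))
          refine ⟨_, (fill_lam_map g D').symm, ?_⟩
          rw [fill_lam, bind_up_eq_fill, fill_lam_map]
          exact hD.lam

theorem MultiStep.exists_fill (hs : Simulates η g h) (hg : ∀ i B, g i ≠ Term.lam B)
    {C : Term (W ⊕ L)} {S' : Term W} (hS : MultiStep η (fill g C) S') :
    ∃ C', S' = fill g C' ∧ Conv η (fill h C) (fill h C') := by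
  induction hS with
  | refl => exact ⟨C, rfl, .refl _⟩
  | tail _ hstep ih =>
      obtain ⟨C₁, rfl, hC₁⟩ := ih
      obtain ⟨C₂, rfl, hC₂⟩ := hstep.exists_fill hs hg
      exact ⟨C₂, rfl, hC₁.trans hC₂⟩

/-- A normal form cannot contain a hole filled by a reducible term. -/
theorem fill_eq_fill_of_normal (hg : ∀ i, ∃ Z, OneStep η (g i) Z) {C : Term (W ⊕ L)}
    (hC : ∀ Z, ¬ OneStep η (fill g C) Z) (h : L → Term W) : fill g C = fill h C := by
  refine bind_congr C fun x hx => ?_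
  rcases x with w | i
  · rfl
  · obtain ⟨Z, hZ⟩ := hg i
    obtain ⟨Z', hZ'⟩ := OneStep.exists_bind_of_mem_fv (f := Sum.elim var g) hx hZ
    exact absurd hZ' (hC Z')

end Fill

section Core

variable {η : Bool} {V : Type u} {F M : Term V}

/-- A core is a reduct `T G` of `Θ F` in which `Θ` and `F` have been reduced separately. -/
def IsCore (η : Bool) (F U : Term V) : Prop :=
  ∃ T G, IsThetaReduct T ∧ MultiStep η F G ∧ U = app T G

theorem IsCore.ne_lam {U : Term V} (hU : IsCore η F U) (B : Term (Option V)) : U ≠ lam B := by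
  obtain ⟨T, G, -, -, rfl⟩ := hU
  nofun

theorem IsCore.exists_oneStep {U : Term V} (hU : IsCore η F U) : ∃ Z, OneStep η U Z := by
  obtain ⟨T, G, rfl | ⟨A, -, rfl⟩, -, rfl⟩ := hU
  · exact ⟨_, (OneStep.beta _ _).appL⟩
  · exact ⟨_, .beta _ _⟩

theorem conv_app_of_multiStep (hfix : Conv η (app F M) M) {G X : Term V}
    (hG : MultiStep η F G) (hX : Conv η M X) : Conv η M (app G X) :=
  hfix.symm.trans (((Conv.of_multiStep hG).appL M).trans (hX.appR G))

theorem ThetaBody.exists_fill_instantiate (hfix : Conv η (app F M) M) {G : Term V}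
    (hG : MultiStep η F G) {A : Term (Option V)} (hA : ThetaBody A) :
    ∃ C, instantiate A G = fill (fun U : {U // IsCore η F U} => U.1) C ∧
      Conv η M (fill (fun _ => M) C) := by
  have hunfold : ∀ T, IsThetaReduct T →
      ∃ C, instantiate (app (var none) (app (map some T) (var none))) G =
          fill (fun U : {U // IsCore η F U} => U.1) C ∧ Conv η M (fill (fun _ => M) C) :=
    fun T hT => ⟨app (map .inl G) (var (.inr ⟨app T G, T, G, hT, hG, rfl⟩)),
      by simp only [instantiate_app, instantiate_map_some, instantiate_var_none, fill_app,
        fill_map_inl, fill_var_inr],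
      by simpa using conv_app_of_multiStep hfix hG (.refl M)⟩
  induction hA with
  | unfold => exact hunfold Theta (Or.inl rfl)
  | @unfoldLam A hA => exact hunfold (lam A) (Or.inr ⟨A, hA, rfl⟩)
  | appVar _ ih =>
      obtain ⟨C, hC, hMC⟩ := ih
      refine ⟨app (map .inl G) C, by simp [hC], ?_⟩
      simpa using conv_app_of_multiStep hfix hG hMC

theorem simulates_isCore (hfix : Conv η (app F M) M) :
    Simulates η (fun U : {U // IsCore η F U} => U.1) (fun _ => M) := by
  rintro ⟨_, T, G, hT, hG, rfl⟩ Z hZ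
  rcases hZ.app_inv with ⟨A, rfl, rfl⟩ | ⟨T', rfl, hT'⟩ | ⟨G', rfl, hG'⟩
  · obtain ⟨A', hA', hAA'⟩ := hT.resolve_left nofun
    cases hAA'
    exact hA'.exists_fill_instantiate hfix hG
  · exact ⟨var (.inr ⟨app T' G, T', G, hT.oneStep hT', hG, rfl⟩), rfl, .refl _⟩
  · exact ⟨var (.inr ⟨app T G', T, G', hT, hG.tail hG', rfl⟩), rfl, .refl _⟩

theorem conv_app_of_conv_theta_app (hfix : Conv η (app F M) M) {N N' : Term V}
    (hN' : ∀ Z, ¬ OneStep η N' Z) (h : Conv η (app (app Theta F) N) N') :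
    Conv η (app M N) N' := by
  let C₀ : Term (V ⊕ {U // IsCore η F U}) :=
    app (var (.inr ⟨app Theta F, Theta, F, Or.inl rfl, .refl, rfl⟩)) (map .inl N)
  have hred : MultiStep η (fill (fun U => U.1) C₀) N' := by
    simpa [C₀] using MultiStep.of_conv_of_normal h hN'
  obtain ⟨C, rfl, hC⟩ := hred.exists_fill (simulates_isCore hfix) (fun U => U.2.ne_lam)
  rw [fill_eq_fill_of_normal (fun U => U.2.exists_oneStep) hN' (fun _ => M)]
  simpa [C₀] using hC

end Core

end Term

theorem Theta_produces_least_fixed_points_general {V : Type} [Infinite V]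
    (R : Term V → Term V → Prop) (hR : R = @Beta V ∨ R = @BetaEta V)
    (F M : Term V)
    (hfix : REquiv R (Term.app F M) M) :
    LeR R (Term.app Theta F) M := by
  obtain ⟨η, rfl⟩ : ∃ η, R = if η then BetaEta else Beta :=
    hR.elim (fun h => ⟨false, h⟩) (fun h => ⟨true, h⟩)
  simp only [LeR, IsNormalFormOf, Reduced, REquiv, Term.step_eq_oneStep, not_exists] at hfix ⊢
  exact fun N _ N' ⟨hN', h⟩ => ⟨hN', Term.conv_app_of_conv_theta_app hfix hN' h⟩

/-- Let `R` be β or βη. For all closed λ-terms `F` and `M`,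
if `F M ≈_R M` then `Θ F ≤_R M`, where `Θ` is Turing's fixed point combinator. -/
theorem Theta_produces_least_fixed_points {V : Type} [Infinite V]
    (R : Term V → Term V → Prop) (hR : R = @Beta V ∨ R = @BetaEta V)
    (F M : Term V) (hF : Closed F) (hM : Closed M)
    (hfix : REquiv R (Term.app F M) M) :
    LeR R (Term.app Theta F) M :=
  Theta_produces_least_fixed_points_general R hR F M hfix
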